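/- Let μ be a finite Borel measure on ℝⁿ, A ⊂ ℝⁿ bounded, 0 < R < ∞, R ≤ r_x ≤ 2R for all x ∈ A, and let θ_x ∈ S^{n-1} be an arbitrary direction assigned to each x ∈ A, and 0 < α ≤ 1. Then there exists a finite set F ⊂ A such that the balls {B(x, r_x)}_{x ∈ F} are pairwise disjoint and ∑_{x ∈ F} μ(B(x, r_x) \ H(x, θ_x, α)) ≥ c·μ(A), where c = c(n, α) > 0 depends only on n and α. -/

import Mathlib

/-!
Cover the unit sphere by finitely many `α`-balls centred at directions `u`, and tile `ℝⁿ` by cubes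
of side `s ≤ R / √n` coloured by their integer index modulo `p`, where `(p - 1) s ≥ 4R`, so that
distinct cubes of one colour are more than `4R` apart. By pigeonhole one class (a direction `u`
and a colour) carries a fixed fraction of `μ(A)`. In each cube `C` of that class pick a point `x`
with at most half of `μ(C)` strictly above it in direction `u`. The rest of `C` lies within
`R ≤ r_x` of `x` and, since `θ_x` is `α`-close to `u`, outside `H(x, θ_x, α)`. The chosen balls
are disjoint because their centres lie in distinct cubes of one colour.
-/

open Set MeasureTheory Metric Filter Topology
open scoped ENNReal RealInnerProductSpace

section Selection

variable {X : Type*} [MeasurableSpace X] (μ : Measure X) {C : Set X} {L : X → ℝ}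

theorem exists_mem_measure_lt_le (hC : C.Nonempty) (hCμ : μ C ≠ ∞) (hL : Measurable L)
    (hbdd : BddAbove (L '' C)) {ε : ℝ≥0∞} (hε : 0 < ε) :
    ∃ x ∈ C, μ {y ∈ C | L x < L y} ≤ ε := by
  set t := sSup (L '' C)
  by_cases hmax : ∃ x ∈ C, t ≤ L x
  · obtain ⟨x, hxC, hx⟩ := hmax
    refine ⟨x, hxC, ?_⟩
    have : {y ∈ C | L x < L y} = ∅ := eq_empty_of_forall_notMem fun y hy =>
      (le_csSup hbdd (mem_image_of_mem L hy.1)).not_gt (hx.trans_lt hy.2)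
    simp [this]
  push Not at hmax
  -- Continuity from above along the superlevel sets `{L > t - δ}`, whose intersection misses `C`.
  have hlim : Tendsto (fun δ => μ.restrict C (L ⁻¹' Ioi (t - δ))) (𝓝[>] 0) (𝓝 0) := by
    have hinter : ⋂ δ > (0 : ℝ), L ⁻¹' Ioi (t - δ) = L ⁻¹' Ici t := by
      ext y
      simp only [mem_iInter, mem_preimage, mem_Ioi, mem_Ici]
      exact ⟨fun h => le_of_forall_pos_lt_add fun δ hδ => by linarith [h δ hδ],
        fun h δ hδ => by linarith⟩
    have hzero : μ.restrict C (L ⁻¹' Ici t) = 0 := by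
      rw [Measure.restrict_apply (hL measurableSet_Ici)]
      exact measure_mono_null (fun y hy => (hmax y hy.2).not_ge hy.1) measure_empty
    rw [← hzero, ← hinter]
    refine tendsto_measure_biInter_gt (fun δ _ => (hL measurableSet_Ioi).nullMeasurableSet)
      (fun δ δ' _ hδ y hy => ?_) ⟨1, one_pos, ?_⟩
    · simp only [mem_preimage, mem_Ioi] at hy ⊢
      linarith
    · rw [Measure.restrict_apply (hL measurableSet_Ioi)]
      exact ne_top_of_le_ne_top hCμ (measure_mono inter_subset_right)
  obtain ⟨δ, hδε, hδ⟩ := ((hlim.eventually (gt_mem_nhds hε)).and self_mem_nhdsWithin).exists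
  obtain ⟨_, ⟨x, hxC, rfl⟩, hx⟩ :=
    exists_lt_of_lt_csSup (hC.image L) (sub_lt_self t (mem_Ioi.1 hδ))
  refine ⟨x, hxC, le_trans ?_ hδε.le⟩
  rw [Measure.restrict_apply (hL measurableSet_Ioi)]
  exact measure_mono fun y hy => ⟨hx.trans hy.2, hy.1⟩

theorem exists_mem_measure_le_two_mul (hC : C.Nonempty) (hCμ : μ C ≠ ∞) (hL : Measurable L)
    (hbdd : BddAbove (L '' C)) :
    ∃ x ∈ C, μ C ≤ 2 * μ {y ∈ C | L y ≤ L x} := by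
  rcases eq_or_ne (μ C) 0 with h0 | h0
  · obtain ⟨x, hx⟩ := hC
    exact ⟨x, hx, by simp [h0]⟩
  obtain ⟨x, hxC, hx⟩ := exists_mem_measure_lt_le μ hC hCμ hL hbdd (ENNReal.half_pos h0)
  refine ⟨x, hxC, ?_⟩
  have hsplit : μ C ≤ μ {y ∈ C | L y ≤ L x} + μ C / 2 :=
    calc μ C ≤ μ ({y ∈ C | L y ≤ L x} ∪ {y ∈ C | L x < L y}) :=
          measure_mono fun y hy => (le_or_gt (L y) (L x)).imp (⟨hy, ·⟩) (⟨hy, ·⟩)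
      _ ≤ _ := (measure_union_le _ _).trans (by gcongr)
  have hhalf : μ C / 2 ≤ μ {y ∈ C | L y ≤ L x} := by
    rw [← ENNReal.sub_half hCμ]
    exact tsub_le_iff_right.2 hsplit
  calc μ C = 2 * (μ C / 2) := (ENNReal.mul_div_cancel two_ne_zero ENNReal.ofNat_ne_top).symm
    _ ≤ _ := by gcongr

theorem exists_finset_measure_le_two_mul_sum [IsFiniteMeasure μ] {G : Set X} {M : Type*}
    (κ : X → M) (hκ : (κ '' G).Finite) (hL : Measurable L) (hbdd : BddAbove (L '' G)) :
    ∃ F : Finset X, ↑F ⊆ G ∧ InjOn κ F ∧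
      μ G ≤ 2 * ∑ x ∈ F, μ {y ∈ G | κ y = κ x ∧ L y ≤ L x} := by
  classical
  obtain rfl | ⟨x₀, -⟩ := G.eq_empty_or_nonempty
  · exact ⟨∅, by simp⟩
  have : Nonempty X := ⟨x₀⟩
  have hcell : ∀ m ∈ κ '' G, ∃ x ∈ {y ∈ G | κ y = m},
      μ {y ∈ G | κ y = m} ≤ 2 * μ {y ∈ G | κ y = m ∧ L y ≤ L x} := by
    rintro _ ⟨x, hx, rfl⟩
    simpa only [mem_ofPred_eq, and_assoc] using exists_mem_measure_le_two_mul μ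
      (C := {y ∈ G | κ y = κ x}) ⟨x, hx, rfl⟩
      (measure_ne_top _ _) hL (hbdd.mono (image_mono (sep_subset _ _)))
  choose! g hgG hg using hcell
  have hgκ : ∀ m ∈ hκ.toFinset, κ (g m) = m := fun m hm => (hgG m (hκ.mem_toFinset.1 hm)).2
  have hginj : InjOn g hκ.toFinset := fun m hm m' hm' h => by
    rw [← hgκ m hm, ← hgκ m' hm', h]
  refine ⟨hκ.toFinset.image g, ?_, ?_, ?_⟩
  · intro x hx
    obtain ⟨m, hm, rfl⟩ := Finset.mem_image.1 hx
    exact (hgG m (hκ.mem_toFinset.1 hm)).1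
  · intro x hx x' hx' h
    obtain ⟨m, hm, rfl⟩ := Finset.mem_image.1 hx
    obtain ⟨m', hm', rfl⟩ := Finset.mem_image.1 hx'
    rw [hgκ m hm, hgκ m' hm'] at h
    rw [h]
  have hcover : G ⊆ ⋃ m ∈ hκ.toFinset, {y ∈ G | κ y = m} := fun y hy =>
    mem_iUnion₂.2 ⟨κ y, hκ.mem_toFinset.2 ⟨y, hy, rfl⟩, hy, rfl⟩
  calc μ G ≤ ∑ m ∈ hκ.toFinset, μ {y ∈ G | κ y = m} :=
        (measure_mono hcover).trans (measure_biUnion_finset_le _ _)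
    _ ≤ ∑ m ∈ hκ.toFinset, 2 * μ {y ∈ G | κ y = κ (g m) ∧ L y ≤ L (g m)} :=
        Finset.sum_le_sum fun m hm => by rw [hgκ m hm]; exact hg m (hκ.mem_toFinset.1 hm)
    _ = _ := by rw [Finset.sum_image hginj, Finset.mul_sum]

theorem exists_measure_le_card_mul_measure_fiber {Λ : Type*} [Nonempty Λ] {A : Set X}
    (P : Finset Λ) (κ : X → Λ) (hκ : ∀ x ∈ A, κ x ∈ P) :
    ∃ l, μ A ≤ P.card * μ {x ∈ A | κ x = l} := by
  rcases P.eq_empty_or_nonempty with rfl | hP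
  · have hA : A = ∅ := eq_empty_of_forall_notMem fun x hx => by simpa using hκ x hx
    exact ⟨Classical.arbitrary Λ, by simp [hA]⟩
  obtain ⟨l, -, hmax⟩ := P.exists_max_image (fun l => μ {x ∈ A | κ x = l}) hP
  have hcover : A ⊆ ⋃ l' ∈ P, {x ∈ A | κ x = l'} := fun x hx =>
    mem_iUnion₂.2 ⟨κ x, hκ x hx, hx, rfl⟩
  refine ⟨l, ?_⟩
  calc μ A ≤ ∑ l' ∈ P, μ {x ∈ A | κ x = l'} :=
        (measure_mono hcover).trans (measure_biUnion_finset_le _ _)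
    _ ≤ P.card • μ {x ∈ A | κ x = l} := Finset.sum_le_card_nsmul _ _ _ hmax
    _ = _ := nsmul_eq_mul _ _

end Selection

theorem sub_one_lt_abs_sub_of_floor_ne_of_modEq {a b : ℝ} {p : ℕ} (hne : ⌊a⌋ ≠ ⌊b⌋)
    (hmod : ⌊a⌋ ≡ ⌊b⌋ [ZMOD p]) : (p : ℝ) - 1 < |a - b| := by
  have hp : (p : ℤ) ≤ |⌊a⌋ - ⌊b⌋| :=
    Int.le_of_dvd (abs_pos.2 (sub_ne_zero.2 hne)) ((dvd_abs _ _).2 hmod.symm.dvd)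
  have hp' : (p : ℝ) ≤ |(⌊a⌋ : ℝ) - ⌊b⌋| := by exact_mod_cast hp
  have hfloor : |((⌊a⌋ : ℝ) - ⌊b⌋) - (a - b)| < 1 := by
    rw [abs_sub_lt_iff]
    constructor <;> linarith [Int.floor_le a, Int.lt_floor_add_one a, Int.floor_le b,
      Int.lt_floor_add_one b]
  linarith [abs_sub_abs_le_abs_sub ((⌊a⌋ : ℝ) - ⌊b⌋) (a - b)]

theorem EuclideanSpace.dist_le_sqrt_card_mul {ι : Type*} [Fintype ι]
    {x y : EuclideanSpace ℝ ι} {s : ℝ} (hs : 0 ≤ s) (h : ∀ i, dist (x i) (y i) ≤ s) :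
    dist x y ≤ √(Fintype.card ι) * s := by
  rw [EuclideanSpace.dist_eq]
  calc √(∑ i, dist (x i) (y i) ^ 2) ≤ √(∑ _i : ι, s ^ 2) :=
        Real.sqrt_le_sqrt (Finset.sum_le_sum fun i _ => pow_le_pow_left₀ dist_nonneg (h i) 2)
    _ = √(Fintype.card ι) * s := by
        rw [Finset.sum_const, Finset.card_univ, nsmul_eq_mul, Real.sqrt_mul (Nat.cast_nonneg _),
          Real.sqrt_sq hs]

theorem exists_grid_modulus (d : ℕ) :
    ∃ p : ℕ, 0 < p ∧ ∀ R > 0, ∃ s > 0, √d * s ≤ R ∧ 4 * R ≤ ((p : ℝ) - 1) * s := by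
  refine ⟨4 * (⌈√d⌉₊ + 1) + 1, by positivity,
    fun R hR => ⟨R / (⌈√d⌉₊ + 1), by positivity, ?_, ?_⟩⟩
  · calc √d * (R / (⌈√d⌉₊ + 1)) ≤ (⌈√d⌉₊ + 1) * (R / (⌈√d⌉₊ + 1)) := by
          gcongr
          linarith [Nat.le_ceil √d]
      _ = R := mul_div_cancel₀ _ (by positivity)
  · push_cast
    field_simp
    linarith

section Grid

variable {ι : Type*} {s : ℝ}

noncomputable def gridCell (s : ℝ) (x : EuclideanSpace ℝ ι) : ι → ℤ := fun i => ⌊x i / s⌋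

noncomputable def gridColor (p : ℕ) (s : ℝ) (x : EuclideanSpace ℝ ι) : ι → ZMod p :=
  fun i => gridCell s x i

theorem dist_le_of_gridCell_eq [Fintype ι] (hs : 0 < s) {x y : EuclideanSpace ℝ ι}
    (h : gridCell s x = gridCell s y) : dist x y ≤ √(Fintype.card ι) * s := by
  refine EuclideanSpace.dist_le_sqrt_card_mul hs.le fun i => ?_
  have h1 := Int.abs_sub_lt_one_of_floor_eq_floor (congrFun h i)
  rw [← sub_div, abs_div, abs_of_pos hs, div_lt_one hs] at h1
  exact (Real.dist_eq _ _).trans_le h1.le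

theorem lt_dist_of_gridCell_ne_of_gridColor_eq [Fintype ι] {p : ℕ} (hs : 0 < s)
    {x y : EuclideanSpace ℝ ι} (hne : gridCell s x ≠ gridCell s y)
    (hcol : gridColor p s x = gridColor p s y) :
    ((p : ℝ) - 1) * s < dist x y := by
  obtain ⟨i, hi⟩ := Function.ne_iff.1 hne
  have hmod := (ZMod.intCast_eq_intCast_iff _ _ _).1 (congrFun hcol i)
  have h1 := sub_one_lt_abs_sub_of_floor_ne_of_modEq hi hmod
  rw [← sub_div, abs_div, abs_of_pos hs, lt_div_iff₀ hs] at h1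
  exact h1.trans_le ((Real.dist_eq _ _).symm.trans_le (PiLp.dist_apply_le x y i))

theorem finite_image_gridCell [Fintype ι] (hs : 0 < s) {A : Set (EuclideanSpace ℝ ι)}
    (hA : Bornology.IsBounded A) : (gridCell s '' A).Finite := by
  obtain ⟨M, hM⟩ := hA.exists_norm_le
  refine (Set.Finite.pi (t := fun _ => Icc ⌊-M / s⌋ ⌊M / s⌋) fun _ => finite_Icc _ _).subset ?_
  rintro _ ⟨x, hx, rfl⟩ i -
  have hxi := abs_le.1 ((PiLp.norm_apply_le x i).trans (hM x hx))
  exact ⟨Int.floor_mono (div_le_div_of_nonneg_right hxi.1 hs.le),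
    Int.floor_mono (div_le_div_of_nonneg_right hxi.2 hs.le)⟩

end Grid

section Cone

variable {F : Type*} [NormedAddCommGroup F] [InnerProductSpace ℝ F]

/-- The cone `H(x, θ, α)`. -/
def openCone (x θ : F) (α : ℝ) : Set F := {y | α * ‖y - x‖ < ⟪y - x, θ⟫}

theorem real_inner_le_mul_norm_of_norm_sub_le {v θ u : F} {α : ℝ} (hvu : ⟪v, u⟫ ≤ 0)
    (hθu : ‖θ - u‖ ≤ α) : ⟪v, θ⟫ ≤ α * ‖v‖ :=
  calc ⟪v, θ⟫ = ⟪v, u⟫ + ⟪v, θ - u⟫ := by rw [inner_sub_right]; ring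
    _ ≤ 0 + ‖v‖ * α := by
        gcongr
        exact (real_inner_le_norm _ _).trans (mul_le_mul_of_nonneg_left hθu (norm_nonneg _))
    _ = α * ‖v‖ := by ring

theorem notMem_openCone_of_inner_le {x y θ u : F} {α : ℝ} (hyx : ⟪u, y⟫ ≤ ⟪u, x⟫)
    (hθu : ‖θ - u‖ ≤ α) : y ∉ openCone x θ α := by
  have hvu : ⟪y - x, u⟫ ≤ 0 := by rw [real_inner_comm, inner_sub_right]; linarith
  exact (real_inner_le_mul_norm_of_norm_sub_le hvu hθu).not_gt

end Cone

theorem exists_finset_pairwiseDisjoint_measure_le_two_mul_sum {ι : Type*} [Fintype ι]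
    (μ : Measure (EuclideanSpace ℝ ι)) [IsFiniteMeasure μ] {G : Set (EuclideanSpace ℝ ι)}
    (hG : Bornology.IsBounded G) {R s α : ℝ} {p : ℕ} (hs : 0 < s)
    (hsR : √(Fintype.card ι) * s ≤ R) (hRp : 4 * R ≤ ((p : ℝ) - 1) * s)
    {r : EuclideanSpace ℝ ι → ℝ} (hr : ∀ x ∈ G, R ≤ r x ∧ r x ≤ 2 * R)
    {θ : EuclideanSpace ℝ ι → EuclideanSpace ℝ ι} {u : EuclideanSpace ℝ ι}
    (hθ : ∀ x ∈ G, ‖θ x - u‖ ≤ α) {c : ι → ZMod p} (hc : ∀ x ∈ G, gridColor p s x = c) :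
    ∃ F : Finset (EuclideanSpace ℝ ι), ↑F ⊆ G ∧
      (F : Set (EuclideanSpace ℝ ι)).PairwiseDisjoint (fun x => closedBall x (r x)) ∧
      μ G ≤ 2 * ∑ x ∈ F, μ (closedBall x (r x) \ openCone x (θ x) α) := by
  obtain ⟨F, hFG, hFinj, hF⟩ := exists_finset_measure_le_two_mul_sum μ (gridCell s)
    (finite_image_gridCell hs hG) (L := fun y => ⟪u, y⟫)
    (continuous_const.inner continuous_id).measurable
    ((innerSL ℝ u).lipschitz.isBounded_image hG).bddAbove
  refine ⟨F, hFG, fun x hx y hy hxy => closedBall_disjoint_closedBall ?_, hF.trans ?_⟩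
  · have := lt_dist_of_gridCell_ne_of_gridColor_eq hs (hFinj.ne hx hy hxy)
      ((hc x (hFG hx)).trans (hc y (hFG hy)).symm)
    linarith [(hr x (hFG hx)).2, (hr y (hFG hy)).2]
  · gcongr with x hx
    rintro y ⟨-, hcell, hL⟩
    refine ⟨?_, notMem_openCone_of_inner_le hL (hθ x (hFG hx))⟩
    rw [mem_closedBall]
    exact (dist_le_of_gridCell_eq hs hcell).trans (hsR.trans (hr x (hFG hx)).1)

theorem stmt_3 (n : ℕ) (α : ℝ) (hα : 0 < α) :
    ∃ c : ℝ≥0∞, 0 < c ∧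
      ∀ (μ : Measure (EuclideanSpace ℝ (Fin n))) (_ : IsFiniteMeasure μ)
        (A : Set (EuclideanSpace ℝ (Fin n))) (_ : Bornology.IsBounded A)
        (R : ℝ) (_ : 0 < R)
        (r : EuclideanSpace ℝ (Fin n) → ℝ)
        (_ : ∀ x ∈ A, R ≤ r x ∧ r x ≤ 2 * R)
        (θ : EuclideanSpace ℝ (Fin n) → EuclideanSpace ℝ (Fin n))
        (_ : ∀ x ∈ A, ‖θ x‖ = 1),
        ∃ F : Finset (EuclideanSpace ℝ (Fin n)), ↑F ⊆ A ∧
          (F : Set (EuclideanSpace ℝ (Fin n))).PairwiseDisjoint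
            (fun x => closedBall x (r x)) ∧
          c * μ A ≤ ∑ x ∈ F,
            μ (closedBall x (r x) \ {y | α * ‖y - x‖ < ⟪y - x, θ x⟫}) := by
  obtain ⟨D, -, hD⟩ := (isCompact_sphere (0 : EuclideanSpace ℝ (Fin n)) 1).elim_nhds_subcover
    (fun u => ball u α) fun u _ => ball_mem_nhds u hα
  have hnet : ∀ v ∈ sphere (0 : EuclideanSpace ℝ (Fin n)) 1, ∃ u ∈ D, ‖v - u‖ < α :=
    fun v hv => by simpa [dist_eq_norm] using hD hv
  choose! π hπD hπ using hnet
  obtain ⟨p, hp0, hp⟩ := exists_grid_modulus n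
  have : NeZero p := ⟨hp0.ne'⟩
  refine ⟨((2 * D.card * p ^ n : ℕ) : ℝ≥0∞)⁻¹, ENNReal.inv_pos.2 (ENNReal.natCast_ne_top _), ?_⟩
  intro μ _ A hA R hR r hr θ hθ
  obtain ⟨s, hs, hsR, hRp⟩ := hp R hR
  obtain ⟨⟨u, c⟩, hG⟩ := exists_measure_le_card_mul_measure_fiber μ (D ×ˢ Finset.univ)
    (fun x => (π (θ x), gridColor p s x)) fun x hx => Finset.mem_product.2
      ⟨hπD _ (mem_sphere_zero_iff_norm.2 (hθ x hx)), Finset.mem_univ _⟩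
  obtain ⟨F, hFG, hdisj, hF⟩ := exists_finset_pairwiseDisjoint_measure_le_two_mul_sum μ
    (G := {x ∈ A | (π (θ x), gridColor p s x) = (u, c)}) (hA.subset (sep_subset _ _)) hs
    (by rwa [Fintype.card_fin]) hRp (fun x hx => hr x hx.1)
    (fun x hx => (Prod.mk.inj hx.2).1 ▸ (hπ _ (mem_sphere_zero_iff_norm.2 (hθ x hx.1))).le)
    (fun x hx => (Prod.mk.inj hx.2).2)
  refine ⟨F, hFG.trans (sep_subset _ _), hdisj, ?_⟩
  rw [← ENNReal.div_eq_inv_mul]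
  refine ENNReal.div_le_of_le_mul' (hG.trans ?_)
  calc _ ≤ (D.card * p ^ n : ℕ) *
        (2 * ∑ x ∈ F, μ (closedBall x (r x) \ openCone x (θ x) α)) := by
        gcongr
        simp
    _ = ((2 * D.card * p ^ n : ℕ) : ℝ≥0∞) *
          ∑ x ∈ F, μ (closedBall x (r x) \ openCone x (θ x) α) := by push_cast; ring
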